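/- Let ψ : κ → ℂ* be a nontrivial additive character and χ : μ_d → ℂ* a nontrivial multiplicative character. Then g(ψ,χ) is an algebraic number, and every complex root of its minimal polynomial over ℚ has absolute value q^{1/2} (i.e., g(ψ,χ) is a q-Weil number of weight one). -/

import Mathlib

/-!
Writing `χ̃(a) = χ(a^((q-1)/d))`, the sum `g(ψ, χ)` is minus the classical Gauss sum of the
multiplicative character `χ̃` of `κ`, which is nontrivial because `m ↦ m^((q-1)/d)` maps the cyclic
group `κˣ` onto `μ_d`. Its values and those of `ψ` are roots of unity, so the Gauss sum lives in
the field `ℚ̄` of algebraic numbers in `ℂ`, and every conjugate is its image under some embedding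
`σ : ℚ̄ → ℂ`. Applying `σ` to the Gauss sum of `χ̃` and `ψ` gives the Gauss sum of the nontrivial
characters `σ ∘ χ̃` and `σ ∘ ψ`, whose absolute value is `√q` by `g · ḡ = q`.
-/

open scoped BigOperators

noncomputable section

namespace MotivicGJ

variable {κ : Type} [Field κ] [Fintype κ] [DecidableEq κ]

/-- The map `κˣ → μ_d`, `m ↦ m ^ ((q - 1) / d)`, where `q = |κ|`. -/
def toMu (d : ℕ) (hd : d ∣ Fintype.card κ - 1) (m : κˣ) : rootsOfUnity d κ :=
  ⟨m ^ ((Fintype.card κ - 1) / d), by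
    rw [mem_rootsOfUnity, ← pow_mul, Nat.div_mul_cancel hd, ← Fintype.card_units]
    exact pow_card_eq_one⟩

/-- The Gauss sum `g(ψ, χ) = -∑_{m ∈ κˣ} ψ(m) χ(m^((q-1)/d))`. -/
def gSum (d : ℕ) (hd : d ∣ Fintype.card κ - 1) (ψ : AddChar κ ℂ)
    (χ : rootsOfUnity d κ →* ℂˣ) : ℂ :=
  - ∑ m : κˣ, ψ (m : κ) * (χ (toMu d hd m) : ℂ)

/-- The Jacobi sum `j(χ₁, …, χₙ)`. -/
def jSum (d : ℕ) (hd : d ∣ Fintype.card κ - 1) {n : ℕ}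
    (χ : Fin n → (rootsOfUnity d κ →* ℂˣ)) : ℂ :=
  (-1 : ℂ) ^ (n - 1) *
    ∑ m ∈ Finset.univ.filter (fun m : Fin n → κˣ => (∑ i, (m i : κ)) = 1),
      ∏ i, (χ i (toMu d hd (m i)) : ℂ)

/-- The conjugate (inverse) additive character `ψ̄(a) = ψ(-a)`. -/
def conjAddChar (ψ : AddChar κ ℂ) : AddChar κ ℂ where
  toFun a := ψ (-a)
  map_zero_eq_one' := by show ψ (-0) = 1; rw [neg_zero]; exact ψ.map_zero_eq_one
  map_add_eq_mul' a b := by show ψ (-(a + b)) = ψ (-a) * ψ (-b); rw [neg_add]; exact ψ.map_add_eq_mul _ _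

theorem _root_.IntermediateField.exists_algHom_algebraicClosure_apply_eq {F E A : Type*} [Field F]
    [Field E] [Field A] [Algebra F E] [Algebra F A] [IsAlgClosed A] (y : algebraicClosure F E)
    {z : A} (hz : Polynomial.aeval z (minpoly F (y : E)) = 0) :
    ∃ σ : algebraicClosure F E →ₐ[F] A, σ y = z := by
  have hroot : z ∈ (minpoly F y).rootSet A := by
    rw [IntermediateField.minpoly_eq, Polynomial.mem_rootSet]
    exact ⟨minpoly.ne_zero y.2, hz⟩
  rwa [← Algebra.IsAlgebraic.range_eval_eq_rootSet_minpoly] at hroot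

/-- `x` is a `q`-Weil number of weight one. -/
def IsWeilNumber (q : ℕ) (x : ℂ) : Prop :=
  IsAlgebraic ℚ x ∧ ∀ z : ℂ, Polynomial.aeval z (minpoly ℚ x) = 0 → ‖z‖ = Real.sqrt q

theorem isWeilNumber_of_forall_ringHom {q : ℕ} (y : algebraicClosure ℚ ℂ)
    (h : ∀ σ : algebraicClosure ℚ ℂ →+* ℂ, ‖σ y‖ = Real.sqrt q) : IsWeilNumber q y := by
  refine ⟨mem_algebraicClosure_iff.1 y.2, fun z hz => ?_⟩
  obtain ⟨σ, rfl⟩ := IntermediateField.exists_algHom_algebraicClosure_apply_eq y hz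
  exact h σ

section Characters

variable {A R R' R'' : Type*}

theorem isIntegral_of_pow_eq_one [CommRing R] [Ring R'] [Algebra R R'] {x : R'} {n : ℕ}
    (hn : n ≠ 0) (h : x ^ n = 1) : IsIntegral R x :=
  IsIntegral.of_pow (Nat.pos_of_ne_zero hn) (h ▸ isIntegral_one)

theorem _root_.AddChar.isIntegral_apply [AddGroup A] [Fintype A] [CommRing R] [CommRing R']
    [Algebra R R'] (ψ : AddChar A R') (a : A) : IsIntegral R (ψ a) :=
  isIntegral_of_pow_eq_one Fintype.card_ne_zero
    (by rw [← AddChar.map_nsmul_eq_pow, card_nsmul_eq_zero, AddChar.map_zero_eq_one])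

theorem _root_.MulChar.isIntegral_apply [CommMonoid A] [Finite Aˣ] [CommRing R] [CommRing R']
    [Algebra R R'] (χ : MulChar A R') (a : A) : IsIntegral R (χ a) := by
  cases nonempty_fintype Aˣ
  by_cases ha : IsUnit a
  · obtain ⟨u, rfl⟩ := ha
    exact isIntegral_of_pow_eq_one Fintype.card_ne_zero
      (by rw [← MulChar.pow_apply_coe, χ.pow_card_eq_one, MulChar.one_apply_coe])
  · rw [χ.map_nonunit ha]
    exact isIntegral_zero

section CodRestrict

variable {K L : Type*} [Field K] [Field L] [Algebra K L] (M : IntermediateField K L)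

def _root_.AddChar.codRestrict [AddMonoid A] (ψ : AddChar A L) (h : ∀ a, ψ a ∈ M) :
    AddChar A M where
  toFun a := ⟨ψ a, h a⟩
  map_zero_eq_one' := Subtype.ext ψ.map_zero_eq_one
  map_add_eq_mul' a b := Subtype.ext (ψ.map_add_eq_mul a b)

theorem _root_.AddChar.compAddChar_codRestrict [AddMonoid A] (ψ : AddChar A L)
    (h : ∀ a, ψ a ∈ M) : (algebraMap M L : M →* L).compAddChar (ψ.codRestrict M h) = ψ :=
  rfl

def _root_.MulChar.codRestrict [CommMonoid A] (χ : MulChar A L) (h : ∀ a, χ a ∈ M) :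
    MulChar A M where
  toFun a := ⟨χ a, h a⟩
  map_one' := Subtype.ext χ.map_one
  map_mul' a b := Subtype.ext (χ.map_mul a b)
  map_nonunit' _ ha := Subtype.ext (χ.map_nonunit ha)

theorem _root_.MulChar.ringHomComp_codRestrict [CommMonoid A] (χ : MulChar A L)
    (h : ∀ a, χ a ∈ M) : (χ.codRestrict M h).ringHomComp (algebraMap M L) = χ :=
  rfl

end CodRestrict

theorem _root_.map_gaussSum [CommRing R] [Fintype R] [CommRing R'] [CommRing R'']
    (f : R' →+* R'') (χ : MulChar R R') (ψ : AddChar R R') :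
    f (gaussSum χ ψ) = gaussSum (χ.ringHomComp f) ((f : R' →* R'').compAddChar ψ) := by
  simp [gaussSum]

theorem _root_.MonoidHom.compAddChar_one [AddMonoid A] [Monoid R'] [Monoid R'']
    (f : R' →* R'') : f.compAddChar (1 : AddChar A R') = 1 := by
  ext
  simp

theorem _root_.MonoidHom.compAddChar_ne_one [AddMonoid A] [Monoid R'] [Monoid R'']
    {f : R' →* R''} (hf : Function.Injective f) {ψ : AddChar A R'} (hψ : ψ ≠ 1) :
    f.compAddChar ψ ≠ 1 := fun h =>
  hψ (MonoidHom.compAddChar_injective_right f hf (h.trans f.compAddChar_one.symm))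

theorem norm_gaussSum [Field R] [Fintype R] {χ : MulChar R ℂ} (hχ : χ ≠ 1) {ψ : AddChar R ℂ}
    (hψ : ψ ≠ 1) : ‖gaussSum χ ψ‖ = Real.sqrt (Fintype.card R) := by
  have hstar : star (gaussSum χ ψ) = gaussSum χ⁻¹ ψ⁻¹ := by
    simp only [gaussSum, star_sum, star_mul', MulChar.star_apply', AddChar.inv_apply',
      RCLike.star_def, ← AddChar.inv_apply_eq_conj]
  have hmul := gaussSum_mul_gaussSum_eq_card hχ (AddChar.IsPrimitive.of_ne_one hψ)
  rw [← hstar, RCLike.star_def, Complex.mul_conj] at hmul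
  rw [Complex.norm_def, (by exact_mod_cast hmul : Complex.normSq (gaussSum χ ψ) = Fintype.card R)]

theorem isWeilNumber_neg_gaussSum [Field R] [Fintype R] {χ : MulChar R ℂ} (hχ : χ ≠ 1)
    {ψ : AddChar R ℂ} (hψ : ψ ≠ 1) : IsWeilNumber (Fintype.card R) (-gaussSum χ ψ) := by
  let M := algebraicClosure ℚ ℂ
  have hχM : ∀ a, χ a ∈ M := χ.isIntegral_apply
  have hψM : ∀ a, ψ a ∈ M := ψ.isIntegral_apply
  have hχ' : χ.codRestrict M hχM ≠ 1 := fun h =>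
    hχ (by rw [← χ.ringHomComp_codRestrict M hχM, h, MulChar.ringHomComp_one])
  have hψ' : ψ.codRestrict M hψM ≠ 1 := fun h =>
    hψ (by rw [← ψ.compAddChar_codRestrict M hψM, h, MonoidHom.compAddChar_one])
  have hG : -gaussSum χ ψ = ↑(-gaussSum (χ.codRestrict M hχM) (ψ.codRestrict M hψM)) := by
    rw [← IntermediateField.algebraMap_apply, map_neg, map_gaussSum, χ.ringHomComp_codRestrict,
      ψ.compAddChar_codRestrict]
  rw [hG]
  refine isWeilNumber_of_forall_ringHom _ fun σ => ?_
  rw [map_neg, norm_neg, map_gaussSum]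
  exact norm_gaussSum ((MulChar.ringHomComp_ne_one_iff σ.injective).2 hχ')
    (MonoidHom.compAddChar_ne_one σ.injective hψ')

end Characters

section GaussSum

variable {d : ℕ} (hd : d ∣ Fintype.card κ - 1)

def toMuHom : κˣ →* rootsOfUnity d κ where
  toFun := toMu d hd
  map_one' := Subtype.ext (one_pow _)
  map_mul' a b := Subtype.ext (mul_pow a b _)

theorem toMu_surjective : Function.Surjective (toMu (κ := κ) d hd) := by
  have hq : Fintype.card κ - 1 ≠ 0 := by have := Fintype.one_lt_card (α := κ); omega
  have : NeZero d := ⟨by rintro rfl; exact hq (zero_dvd_iff.1 hd)⟩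
  obtain ⟨g, hg⟩ := IsCyclic.exists_ofOrder_eq_natCard (α := κˣ)
  rw [Nat.card_units, Nat.card_eq_fintype_card] at hg
  have hprim : IsPrimitiveRoot (g ^ ((Fintype.card κ - 1) / d)) d :=
    (hg ▸ IsPrimitiveRoot.orderOf g).pow (Nat.pos_of_ne_zero hq) (Nat.div_mul_cancel hd).symm
  intro u
  obtain ⟨i, -, hi⟩ := hprim.eq_pow_of_mem_rootsOfUnity u.2
  refine ⟨g ^ i, Subtype.ext ?_⟩
  change (g ^ i) ^ _ = _
  rw [← hi, ← pow_mul, ← pow_mul, mul_comm]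

def toMulChar (χ : rootsOfUnity d κ →* ℂˣ) : MulChar κ ℂ :=
  MulChar.ofUnitHom (χ.comp (toMuHom hd))

theorem toMulChar_ne_one {χ : rootsOfUnity d κ →* ℂˣ} (hχ : χ ≠ 1) : toMulChar hd χ ≠ 1 := by
  obtain ⟨u, hu⟩ := DFunLike.ne_iff.1 hχ
  obtain ⟨m, rfl⟩ := toMu_surjective hd u
  exact MulChar.ne_one_iff.2 ⟨m, by rwa [toMulChar, MulChar.ofUnitHom_coe, Ne, Units.val_eq_one]⟩

theorem gSum_eq_neg_gaussSum (ψ : AddChar κ ℂ) (χ : rootsOfUnity d κ →* ℂˣ) :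
    gSum d hd ψ χ = -gaussSum (toMulChar hd χ) ψ := by
  rw [gSum, gaussSum]
  congr 1
  refine Fintype.sum_of_injective Units.val Units.val_injective _ _ (fun a ha => ?_) fun u => ?_
  · rw [MulChar.map_nonunit _ ha, zero_mul]
  · rw [toMulChar, MulChar.ofUnitHom_coe, mul_comm]
    rfl

end GaussSum

theorem gSum_isWeilNumber_general (d : ℕ) (hd : d ∣ Fintype.card κ - 1)
    (ψ : AddChar κ ℂ) (hψ : ψ ≠ 1) (χ : rootsOfUnity d κ →* ℂˣ) (hχ : χ ≠ 1) :
    IsAlgebraic ℚ (gSum d hd ψ χ) ∧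
      ∀ z : ℂ, Polynomial.aeval z (minpoly ℚ (gSum d hd ψ χ)) = 0 →
        ‖z‖ = Real.sqrt (Fintype.card κ) := by
  rw [gSum_eq_neg_gaussSum]
  exact isWeilNumber_neg_gaussSum (toMulChar_ne_one hd hχ) hψ

/-- For nontrivial `ψ` and `χ`, the Gauss sum `g(ψ,χ)` is an algebraic
number all of whose conjugates (complex roots of its minimal polynomial over `ℚ`) have
absolute value `q^(1/2)`, i.e. it is a `q`-Weil number of weight one. -/
theorem gSum_isWeilNumber (d : ℕ) (hd0 : 0 < d) (hd : d ∣ Fintype.card κ - 1)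
    (ψ : AddChar κ ℂ) (hψ : ψ ≠ 1) (χ : rootsOfUnity d κ →* ℂˣ) (hχ : χ ≠ 1) :
    IsAlgebraic ℚ (gSum d hd ψ χ) ∧
      ∀ z : ℂ, Polynomial.aeval z (minpoly ℚ (gSum d hd ψ χ)) = 0 →
        ‖z‖ = Real.sqrt (Fintype.card κ) :=
  gSum_isWeilNumber_general d hd ψ hψ χ hχ

end MotivicGJ
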